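/- Let f : ℝ → ℝ be twice differentiable on (0,∞) and suppose the function u ↦ f''(u) + f'(u)/u is not identically zero on (0,∞) (i.e. the surface of revolution r(u,v) = (u sinh v, u cosh v, f(u)) is not semi-isotropic minimal). If there exist λ₁, λ₂, λ₃ ∈ ℝ with Δrᵢ = λᵢ rᵢ for i = 1,2,3 at all points (u,v) with u > 0, then λ₁ = λ₂ = 0, λ₃ ≠ 0, and f satisfies the Bessel-type equation f''(u) + f'(u)/u + λ₃ f(u) = 0 for all u > 0; consequently there exist c₁, c₂ ∈ ℝ such that f(u) = c₁ J₀(√λ₃ u) + c₂ Y₀(√λ₃ u) if λ₃ > 0, and f(u) = c₁ I₀(√(−λ₃) u) + c₂ K₀(√(−λ₃) u) if λ₃ < 0. -/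

import Mathlib

/-- The Bessel function of the first kind of order zero,
`J₀(x) = ∑ (−1)ⁿ x²ⁿ / (2²ⁿ (n!)²)`. -/
noncomputable def besselJ0 (x : ℝ) : ℝ :=
  ∑' n : ℕ, (-1 : ℝ) ^ n * x ^ (2 * n) / (2 ^ (2 * n) * ((n.factorial : ℝ)) ^ 2)

/-- `φ(n) = ∑_{m=1}^n 1/m`, with `φ(0) = 0`. -/
noncomputable def harmonicPhi (n : ℕ) : ℝ :=
  ∑ m ∈ Finset.range n, (1 : ℝ) / (m + 1)

/-- Weber's Bessel function of order zero,
`Y₀(x) = (2/π)[(ln(x/2) + γ) J₀(x) − ∑ (−1)ⁿ φ(n) x²ⁿ / (2²ⁿ (n!)²)]`. -/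
noncomputable def besselY0 (x : ℝ) : ℝ :=
  (2 / Real.pi) *
    ((Real.log (x / 2) + Real.eulerMascheroniConstant) * besselJ0 x -
      ∑' n : ℕ, (-1 : ℝ) ^ n * harmonicPhi n * x ^ (2 * n) /
        (2 ^ (2 * n) * ((n.factorial : ℝ)) ^ 2))

/-- The modified Bessel function of the first kind of order zero,
`I₀(x) = ∑ x²ⁿ / (2²ⁿ (n!)²)`. -/
noncomputable def besselI0 (x : ℝ) : ℝ :=
  ∑' n : ℕ, x ^ (2 * n) / (2 ^ (2 * n) * ((n.factorial : ℝ)) ^ 2)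

/-- The modified Bessel function of the second kind of order zero,
`K₀(x) = −(ln(x/2) + γ) I₀(x) + ∑ φ(n) x²ⁿ / (2²ⁿ (n!)²)`. -/
noncomputable def besselK0 (x : ℝ) : ℝ :=
  -(Real.log (x / 2) + Real.eulerMascheroniConstant) * besselI0 x +
    ∑' n : ℕ, harmonicPhi n * x ^ (2 * n) / (2 ^ (2 * n) * ((n.factorial : ℝ)) ^ 2)

/-- The Laplace operator of the first fundamental form of the surface of revolution
`r(u,v) = (u sinh v, u cosh v, f(u))` in the semi-isotropic space (`E = −1`, `F = 0`,
`G = u²`, `W = −u²`), following the general formula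
`Δψ = −(1/√|W|)[∂_u((Gψ_u − Fψ_v)/√|W|) − ∂_v((Fψ_u − Eψ_v)/√|W|)]`. -/
noncomputable def lapI (ψ : ℝ → ℝ → ℝ) (u v : ℝ) : ℝ :=
  -(1 / Real.sqrt |(-1 : ℝ) * u ^ 2 - 0 ^ 2|) *
    (deriv (fun t =>
        (t ^ 2 * deriv (fun s => ψ s v) t - 0 * deriv (fun s => ψ t s) v) /
          Real.sqrt |(-1 : ℝ) * t ^ 2 - 0 ^ 2|) u
      - deriv (fun w =>
        (0 * deriv (fun s => ψ s w) u - (-1 : ℝ) * deriv (fun s => ψ u s) w) /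
          Real.sqrt |(-1 : ℝ) * u ^ 2 - 0 ^ 2|) v)

/-!
In the semi-isotropic Laplacian, `Δ(u sinh v) = Δ(u cosh v) = 0`, which forces `λ₁ = λ₂ = 0`,
while `Δ f(u) = -(f'' + f'/u)`; so the third equation is the Bessel equation
`f'' + f'/u + λ₃ f = 0`, and non-minimality gives `λ₃ ≠ 0`.

For the Bessel equation put `F(t) = ∑ tⁿ/(n!)²` and `G(t) = ∑ φ(n) tⁿ/(n!)²`. Their coefficient
recurrences give `t F'' + F' = F` and `t G'' + G' = G + F'`, and with `t = -λu²/4` this yields, for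
every `λ`, the Frobenius pair of solutions `y₁ = F(t)`, `y₂ = log u · y₁ - G(t)`. By Abel's identity
`u W(y, z)` is constant for any two solutions; for `(y₁, y₂)` it is a continuous function of `t`
equal to `1` at `t = 0`, hence identically `1`, and then
`f = u W(f, y₂) · y₁ + u W(y₁, f) · y₂`. Finally `J₀, Y₀` (for `λ > 0`) and `I₀, K₀` (for `λ < 0`),
evaluated at `√|λ| u`, are invertible combinations of `y₁` and `y₂`.
-/

open Filter Topology Set
open scoped Nat

noncomputable section

/-! ### Power series with factorially bounded coefficients -/

def seriesFun (a : ℕ → ℝ) (t : ℝ) : ℝ := ∑' n, a n * t ^ n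

def derivCoeff (a : ℕ → ℝ) (n : ℕ) : ℝ := (n + 1) * a (n + 1)

def FactorialBounded (a : ℕ → ℝ) : Prop := ∃ C, ∀ n, |a n| ≤ C / n !

namespace FactorialBounded

variable {a : ℕ → ℝ}

theorem derivCoeff (ha : FactorialBounded a) : FactorialBounded (derivCoeff a) := by
  obtain ⟨C, hC⟩ := ha
  refine ⟨C, fun n => ?_⟩
  have hn : (0 : ℝ) < n + 1 := by positivity
  calc |(n + 1 : ℝ) * a (n + 1)| = (n + 1) * |a (n + 1)| := by rw [abs_mul, abs_of_pos hn]
    _ ≤ (n + 1) * (C / (n + 1) !) := by gcongr; exact hC _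
    _ = C / n ! := by
        rw [Nat.factorial_succ, Nat.cast_mul, Nat.cast_succ]; field_simp

theorem summable_abs_mul_pow (ha : FactorialBounded a) {R : ℝ} (hR : 0 ≤ R) :
    Summable fun n => |a n| * R ^ n := by
  obtain ⟨C, hC⟩ := ha
  refine .of_nonneg_of_le (fun n => by positivity) (fun n => ?_)
    ((Real.summable_pow_div_factorial R).mul_left C)
  calc |a n| * R ^ n ≤ C / n ! * R ^ n := by gcongr; exact hC n
    _ = C * (R ^ n / n !) := by ring

theorem summable (ha : FactorialBounded a) (t : ℝ) : Summable fun n => a n * t ^ n :=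
  .of_norm <| by simpa [abs_mul, abs_pow] using ha.summable_abs_mul_pow (abs_nonneg t)

end FactorialBounded

section

variable {a : ℕ → ℝ}

theorem hasDerivAt_seriesFun (ha : FactorialBounded a) (x : ℝ) :
    HasDerivAt (seriesFun a) (seriesFun (derivCoeff a) x) x := by
  set R := |x| + 1
  have hx : x ∈ Metric.ball (0 : ℝ) R := by simp [R]
  have hR : 0 ≤ R := by positivity
  have hu : Summable fun n => |a n| * n * R ^ (n - 1) := by
    refine (summable_nat_add_iff 1).mp
      ((ha.derivCoeff.summable_abs_mul_pow hR).congr fun n => ?_)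
    rw [derivCoeff, abs_mul, abs_of_pos (by positivity), Nat.add_sub_cancel]
    push_cast
    ring
  have hbound : ∀ n, ∀ y ∈ Metric.ball (0 : ℝ) R,
      ‖a n * (n * y ^ (n - 1))‖ ≤ |a n| * n * R ^ (n - 1) := by
    intro n y hy
    rw [mem_ball_zero_iff, Real.norm_eq_abs] at hy
    rw [Real.norm_eq_abs, abs_mul, abs_mul, abs_pow, Nat.abs_cast, ← mul_assoc]
    gcongr
  have h := hasDerivAt_tsum_of_isPreconnected hu Metric.isOpen_ball
    (convex_ball 0 R).isPreconnected (fun n y _ => (hasDerivAt_pow n y).const_mul (a n))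
    hbound (Metric.mem_ball_self (by positivity)) (ha.summable 0) hx
  have hshift : (fun n => a (n + 1) * ((n + 1 : ℕ) * x ^ (n + 1 - 1))) =
      fun n => derivCoeff a n * x ^ n := by
    ext n
    rw [derivCoeff, Nat.add_sub_cancel]
    push_cast
    ring
  rwa [tsum_eq_zero_add' (hshift ▸ ha.derivCoeff.summable x), hshift, Nat.cast_zero, zero_mul,
    mul_zero, zero_add] at h

theorem continuous_seriesFun (ha : FactorialBounded a) : Continuous (seriesFun a) :=
  continuous_iff_continuousAt.2 fun x => (hasDerivAt_seriesFun ha x).continuousAt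

theorem hasSum_mul_seriesFun_derivCoeff (ha : FactorialBounded a) (t : ℝ) :
    HasSum (fun n => n * a n * t ^ n) (t * seriesFun (derivCoeff a) t) := by
  rw [← hasSum_nat_add_iff' 1]
  simpa [seriesFun, derivCoeff, pow_succ, mul_comm, mul_left_comm, mul_assoc] using
    ((ha.derivCoeff.summable t).hasSum.mul_left t)

theorem seriesFun_derivCoeff_bessel (ha : FactorialBounded a) (t : ℝ) :
    t * seriesFun (derivCoeff (derivCoeff a)) t + seriesFun (derivCoeff a) t =
      seriesFun (fun n => (n + 1) ^ 2 * a (n + 1)) t := by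
  refine ((hasSum_mul_seriesFun_derivCoeff ha.derivCoeff t).add
    (ha.derivCoeff.summable t).hasSum).tsum_eq.symm.trans (tsum_congr fun n => ?_)
  simp only [derivCoeff]
  ring

end

theorem seriesFun_zero (a : ℕ → ℝ) : seriesFun a 0 = a 0 := by
  rw [seriesFun, tsum_eq_single 0 fun n hn => by simp [hn]]
  simp

theorem harmonicPhi_le (n : ℕ) : harmonicPhi n ≤ n := by
  calc harmonicPhi n ≤ ∑ _m ∈ Finset.range n, (1 : ℝ) :=
        Finset.sum_le_sum fun m _ => div_le_one_of_le₀ (by linarith [m.cast_nonneg (α := ℝ)])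
          (by positivity)
    _ = n := by simp

theorem harmonicPhi_succ (n : ℕ) : harmonicPhi (n + 1) = harmonicPhi n + 1 / (n + 1) := by
  rw [harmonicPhi, Finset.sum_range_succ, harmonicPhi]

def besselCoeff (n : ℕ) : ℝ := ((n ! : ℝ) ^ 2)⁻¹

def besselLogCoeff (n : ℕ) : ℝ := harmonicPhi n / (n ! : ℝ) ^ 2

theorem factorialBounded_besselCoeff : FactorialBounded besselCoeff := by
  refine ⟨1, fun n => ?_⟩
  have h : (1 : ℝ) ≤ n ! := by exact_mod_cast n.factorial_pos
  rw [besselCoeff, abs_of_pos (by positivity), sq, mul_inv, one_div]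
  exact mul_le_of_le_one_right (by positivity) (inv_le_one_of_one_le₀ h)

theorem factorialBounded_besselLogCoeff : FactorialBounded besselLogCoeff := by
  refine ⟨1, fun n => ?_⟩
  have h : (n : ℝ) ≤ n ! := by exact_mod_cast n.self_le_factorial
  have hφ : 0 ≤ harmonicPhi n := Finset.sum_nonneg fun _ _ => by positivity
  rw [besselLogCoeff, abs_of_nonneg (by positivity), div_le_div_iff₀ (by positivity)
    (by positivity), one_mul, sq]
  exact mul_le_mul_of_nonneg_right ((harmonicPhi_le n).trans h) (by positivity)

theorem besselCoeff_succ (n : ℕ) : ((n : ℝ) + 1) ^ 2 * besselCoeff (n + 1) = besselCoeff n := by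
  rw [besselCoeff, besselCoeff, Nat.factorial_succ, Nat.cast_mul, Nat.cast_succ]
  field_simp

theorem besselLogCoeff_succ (n : ℕ) :
    ((n : ℝ) + 1) ^ 2 * besselLogCoeff (n + 1) = besselLogCoeff n + derivCoeff besselCoeff n := by
  rw [besselLogCoeff, besselLogCoeff, derivCoeff, besselCoeff, harmonicPhi_succ,
    Nat.factorial_succ, Nat.cast_mul, Nat.cast_succ]
  field_simp

theorem seriesFun_besselCoeff_bessel (t : ℝ) :
    t * seriesFun (derivCoeff (derivCoeff besselCoeff)) t + seriesFun (derivCoeff besselCoeff) t =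
      seriesFun besselCoeff t := by
  rw [seriesFun_derivCoeff_bessel factorialBounded_besselCoeff]
  simp only [besselCoeff_succ]

theorem seriesFun_besselLogCoeff_bessel (t : ℝ) :
    t * seriesFun (derivCoeff (derivCoeff besselLogCoeff)) t +
        seriesFun (derivCoeff besselLogCoeff) t =
      seriesFun besselLogCoeff t + seriesFun (derivCoeff besselCoeff) t := by
  rw [seriesFun_derivCoeff_bessel factorialBounded_besselLogCoeff]
  simp only [besselLogCoeff_succ, seriesFun, add_mul]
  exact (factorialBounded_besselLogCoeff.summable t).tsum_add
    (factorialBounded_besselCoeff.derivCoeff.summable t)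

/-! ### The Bessel equation on `(0, ∞)` -/

def besselOp (lam : ℝ) (y : ℝ → ℝ) (u : ℝ) : ℝ :=
  deriv (deriv y) u + deriv y u / u + lam * y u

def IsBesselSolution (lam : ℝ) (y : ℝ → ℝ) : Prop :=
  ∀ u > 0, DifferentiableAt ℝ y u ∧ DifferentiableAt ℝ (deriv y) u ∧ besselOp lam y u = 0

def wronskian (y z : ℝ → ℝ) (u : ℝ) : ℝ := y u * deriv z u - deriv y u * z u

namespace IsBesselSolution

variable {lam : ℝ} {f y z : ℝ → ℝ}

theorem exists_mul_wronskian_eq (hy : IsBesselSolution lam y) (hz : IsBesselSolution lam z) :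
    ∃ C, ∀ u > 0, u * wronskian y z u = C := by
  have hd : ∀ u > 0, HasDerivAt (fun u => u * wronskian y z u) 0 u := by
    intro u hu
    obtain ⟨hy₁, hy₂, hy₃⟩ := hy u hu
    obtain ⟨hz₁, hz₂, hz₃⟩ := hz u hu
    refine ((hasDerivAt_id u).mul ((hy₁.hasDerivAt.mul hz₂.hasDerivAt).sub
      (hy₂.hasDerivAt.mul hz₁.hasDerivAt))).congr_deriv ?_
    rw [besselOp] at hy₃ hz₃
    field_simp at hy₃ hz₃
    simp only [Pi.mul_apply, Pi.sub_apply, id]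
    linear_combination y u * hz₃ - z u * hy₃
  exact isOpen_Ioi.exists_is_const_of_deriv_eq_zero isPreconnected_Ioi
    (fun u hu => (hd u hu).differentiableAt.differentiableWithinAt) (fun u hu => (hd u hu).deriv)

theorem exists_eq_add (hf : IsBesselSolution lam f) {y₁ y₂ : ℝ → ℝ}
    (h₁ : IsBesselSolution lam y₁) (h₂ : IsBesselSolution lam y₂)
    (hW : ∀ u > 0, u * wronskian y₁ y₂ u = 1) :
    ∃ c₁ c₂ : ℝ, ∀ u > 0, f u = c₁ * y₁ u + c₂ * y₂ u := by
  obtain ⟨c₁, hc₁⟩ := hf.exists_mul_wronskian_eq h₂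
  obtain ⟨c₂, hc₂⟩ := h₁.exists_mul_wronskian_eq hf
  refine ⟨c₁, c₂, fun u hu => ?_⟩
  rw [← hc₁ u hu, ← hc₂ u hu]
  simp only [wronskian] at hW ⊢
  linear_combination (-f u) * hW u hu

end IsBesselSolution

theorem hasDerivAt_log_mul_sub {y z : ℝ → ℝ} {u : ℝ} (hy : DifferentiableAt ℝ y u)
    (hz : DifferentiableAt ℝ z u) (hu : u ≠ 0) :
    HasDerivAt (fun u => Real.log u * y u - z u) (y u / u + Real.log u * deriv y u - deriv z u) u :=
  (((Real.hasDerivAt_log hu).mul hy.hasDerivAt).sub hz.hasDerivAt).congr_deriv (by ring)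

theorem IsBesselSolution.log_mul_sub {lam : ℝ} {y z : ℝ → ℝ} (hy : IsBesselSolution lam y)
    (hz : Differentiable ℝ z) (hz' : Differentiable ℝ (deriv z))
    (hbz : ∀ u > 0, besselOp lam z u = 2 * deriv y u / u) :
    IsBesselSolution lam (fun u => Real.log u * y u - z u) := by
  intro u hu
  obtain ⟨hy₁, hy₂, hy₃⟩ := hy u hu
  have hev : deriv (fun u => Real.log u * y u - z u) =ᶠ[𝓝 u]
      fun u => y u / u + Real.log u * deriv y u - deriv z u :=
    eventually_of_mem (Ioi_mem_nhds hu) fun w hw =>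
      (hasDerivAt_log_mul_sub (hy w hw).1 (hz w) (ne_of_gt hw)).deriv
  have hdd : HasDerivAt (fun u => y u / u + Real.log u * deriv y u - deriv z u) _ u :=
    ((hy₁.hasDerivAt.div (hasDerivAt_id u) hu.ne').add
      ((Real.hasDerivAt_log hu.ne').mul hy₂.hasDerivAt)).sub (hz' u).hasDerivAt
  refine ⟨(hasDerivAt_log_mul_sub hy₁ (hz u) hu.ne').differentiableAt,
    (hdd.congr_of_eventuallyEq hev).differentiableAt, ?_⟩
  have hz₃ := hbz u hu
  rw [besselOp] at hy₃ hz₃ ⊢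
  rw [hev.deriv_eq, hdd.deriv, (hasDerivAt_log_mul_sub hy₁ (hz u) hu.ne').deriv]
  simp only [id]
  field_simp at hy₃ hz₃ ⊢
  linear_combination Real.log u * u * hy₃ - u * hz₃

section

variable {a : ℕ → ℝ}

theorem hasDerivAt_seriesFun_mul_sq (ha : FactorialBounded a) (c u : ℝ) :
    HasDerivAt (fun u => seriesFun a (c * u ^ 2))
      (2 * c * u * seriesFun (derivCoeff a) (c * u ^ 2)) u :=
  ((hasDerivAt_seriesFun ha _).comp u ((hasDerivAt_pow 2 u).const_mul c)).congr_deriv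
    (by simp only [Nat.cast_ofNat]; ring)

theorem differentiable_seriesFun_mul_sq (ha : FactorialBounded a) (c : ℝ) :
    Differentiable ℝ fun u => seriesFun a (c * u ^ 2) :=
  fun u => (hasDerivAt_seriesFun_mul_sq ha c u).differentiableAt

theorem deriv_seriesFun_mul_sq (ha : FactorialBounded a) (c : ℝ) :
    deriv (fun u => seriesFun a (c * u ^ 2)) =
      fun u => 2 * c * u * seriesFun (derivCoeff a) (c * u ^ 2) :=
  funext fun u => (hasDerivAt_seriesFun_mul_sq ha c u).deriv

theorem differentiable_deriv_seriesFun_mul_sq (ha : FactorialBounded a) (c : ℝ) :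
    Differentiable ℝ (deriv fun u => seriesFun a (c * u ^ 2)) := by
  rw [deriv_seriesFun_mul_sq ha]
  exact ((differentiable_id.const_mul _).mul (differentiable_seriesFun_mul_sq ha.derivCoeff c))

theorem besselOp_seriesFun_mul_sq (ha : FactorialBounded a) (lam c : ℝ) {u : ℝ} (hu : u ≠ 0) :
    besselOp lam (fun u => seriesFun a (c * u ^ 2)) u =
      4 * c * (c * u ^ 2 * seriesFun (derivCoeff (derivCoeff a)) (c * u ^ 2) +
        seriesFun (derivCoeff a) (c * u ^ 2)) + lam * seriesFun a (c * u ^ 2) := by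
  have h : HasDerivAt (fun u => 2 * c * u * seriesFun (derivCoeff a) (c * u ^ 2)) _ u :=
    ((hasDerivAt_id u).const_mul (2 * c)).mul (hasDerivAt_seriesFun_mul_sq ha.derivCoeff c u)
  rw [besselOp, deriv_seriesFun_mul_sq ha, h.deriv, id]
  field_simp
  ring

end

def besselSol₁ (lam : ℝ) : ℝ → ℝ := fun u => seriesFun besselCoeff (-lam / 4 * u ^ 2)

def besselSol₂ (lam : ℝ) : ℝ → ℝ := fun u =>
  Real.log u * besselSol₁ lam u - seriesFun besselLogCoeff (-lam / 4 * u ^ 2)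

theorem isBesselSolution_besselSol₁ (lam : ℝ) : IsBesselSolution lam (besselSol₁ lam) := by
  refine fun u hu => ⟨differentiable_seriesFun_mul_sq factorialBounded_besselCoeff _ u,
    differentiable_deriv_seriesFun_mul_sq factorialBounded_besselCoeff _ u, ?_⟩
  unfold besselSol₁
  rw [besselOp_seriesFun_mul_sq factorialBounded_besselCoeff _ _ hu.ne',
    seriesFun_besselCoeff_bessel]
  ring

theorem isBesselSolution_besselSol₂ (lam : ℝ) : IsBesselSolution lam (besselSol₂ lam) := by
  refine (isBesselSolution_besselSol₁ lam).log_mul_sub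
    (differentiable_seriesFun_mul_sq factorialBounded_besselLogCoeff _)
    (differentiable_deriv_seriesFun_mul_sq factorialBounded_besselLogCoeff _) fun u hu => ?_
  rw [besselOp_seriesFun_mul_sq factorialBounded_besselLogCoeff _ _ hu.ne',
    seriesFun_besselLogCoeff_bessel]
  unfold besselSol₁
  rw [deriv_seriesFun_mul_sq factorialBounded_besselCoeff]
  field_simp
  ring

theorem mul_wronskian_besselSol (lam : ℝ) {u : ℝ} (hu : 0 < u) :
    u * wronskian (besselSol₁ lam) (besselSol₂ lam) u = 1 := by
  let F := seriesFun besselCoeff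
  let F' := seriesFun (derivCoeff besselCoeff)
  let G := seriesFun besselLogCoeff
  let G' := seriesFun (derivCoeff besselLogCoeff)
  let Φ : ℝ → ℝ := fun t => F t ^ 2 - 2 * t * F t * G' t + 2 * t * F' t * G t
  have hΦ : ∀ u > 0, u * wronskian (besselSol₁ lam) (besselSol₂ lam) u = Φ (-lam / 4 * u ^ 2) := by
    intro u hu
    have hy := hasDerivAt_seriesFun_mul_sq factorialBounded_besselCoeff (-lam / 4) u
    have hz := hasDerivAt_seriesFun_mul_sq factorialBounded_besselLogCoeff (-lam / 4) u
    unfold wronskian besselSol₂ besselSol₁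
    rw [(hasDerivAt_log_mul_sub hy.differentiableAt hz.differentiableAt
      hu.ne').deriv, hy.deriv, hz.deriv]
    field_simp
    ring
  have hΦ_cont : Continuous Φ := by
    have := continuous_seriesFun factorialBounded_besselCoeff
    have := continuous_seriesFun factorialBounded_besselCoeff.derivCoeff
    have := continuous_seriesFun factorialBounded_besselLogCoeff
    have := continuous_seriesFun factorialBounded_besselLogCoeff.derivCoeff
    fun_prop
  have hΦ_zero : Φ 0 = 1 := by simp [Φ, F, seriesFun_zero, besselCoeff]
  obtain ⟨C, hC⟩ := (isBesselSolution_besselSol₁ lam).exists_mul_wronskian_eq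
    (isBesselSolution_besselSol₂ lam)
  have h₁ : Tendsto (fun u => Φ (-lam / 4 * u ^ 2)) (𝓝[>] 0) (𝓝 1) := by
    rw [← hΦ_zero]
    refine ((hΦ_cont.comp (by fun_prop : Continuous fun u : ℝ => -lam / 4 * u ^ 2)).tendsto' 0 (Φ 0)
      (by simp)).mono_left nhdsWithin_le_nhds
  have h₂ : Tendsto (fun u => Φ (-lam / 4 * u ^ 2)) (𝓝[>] 0) (𝓝 C) :=
    tendsto_const_nhds.congr' (eventually_nhdsWithin_of_forall fun u hu =>
      (hC u hu).symm.trans (hΦ u hu))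
  rw [hC u hu, tendsto_nhds_unique h₂ h₁]

theorem IsBesselSolution.exists_eq_besselSol {lam : ℝ} {f : ℝ → ℝ}
    (hf : IsBesselSolution lam f) :
    ∃ c₁ c₂ : ℝ, ∀ u > 0, f u = c₁ * besselSol₁ lam u + c₂ * besselSol₂ lam u :=
  hf.exists_eq_add (isBesselSolution_besselSol₁ lam) (isBesselSolution_besselSol₂ lam)
    fun _ hu => mul_wronskian_besselSol lam hu

/-! ### The Bessel functions of order zero -/

theorem two_pow_two_mul (n : ℕ) : (2 : ℝ) ^ (2 * n) = 4 ^ n := by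
  rw [pow_mul]
  norm_num

theorem besselJ0_eq_seriesFun (x : ℝ) : besselJ0 x = seriesFun besselCoeff (-x ^ 2 / 4) :=
  tsum_congr fun n => by
    rw [besselCoeff, two_pow_two_mul, neg_div, neg_pow (x ^ 2 / 4), div_pow, ← pow_mul]; ring

theorem besselI0_eq_seriesFun (x : ℝ) : besselI0 x = seriesFun besselCoeff (x ^ 2 / 4) :=
  tsum_congr fun n => by rw [besselCoeff, two_pow_two_mul, div_pow, ← pow_mul]; ring

theorem besselY0_eq_seriesFun (x : ℝ) :
    besselY0 x = 2 / Real.pi * ((Real.log (x / 2) + Real.eulerMascheroniConstant) * besselJ0 x -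
      seriesFun besselLogCoeff (-x ^ 2 / 4)) := by
  rw [besselY0, seriesFun]
  congr 3 with n
  rw [besselLogCoeff, two_pow_two_mul, neg_div, neg_pow (x ^ 2 / 4), div_pow, ← pow_mul]
  ring

theorem besselK0_eq_seriesFun (x : ℝ) :
    besselK0 x = -(Real.log (x / 2) + Real.eulerMascheroniConstant) * besselI0 x +
      seriesFun besselLogCoeff (x ^ 2 / 4) := by
  rw [besselK0, seriesFun]
  congr 2 with n
  rw [besselLogCoeff, two_pow_two_mul, div_pow, ← pow_mul]
  ring

theorem log_mul_div_two {k u : ℝ} (hk : 0 < k) (hu : 0 < u) :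
    Real.log (k * u / 2) = Real.log u + Real.log (k / 2) := by
  rw [show k * u / 2 = u * (k / 2) by ring, Real.log_mul hu.ne' (by positivity)]

theorem besselJ0_sqrt_mul {lam : ℝ} (hlam : 0 ≤ lam) (u : ℝ) :
    besselJ0 (Real.sqrt lam * u) = besselSol₁ lam u := by
  rw [besselJ0_eq_seriesFun, mul_pow, Real.sq_sqrt hlam, besselSol₁]
  ring_nf

theorem besselI0_sqrt_neg_mul {lam : ℝ} (hlam : lam ≤ 0) (u : ℝ) :
    besselI0 (Real.sqrt (-lam) * u) = besselSol₁ lam u := by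
  rw [besselI0_eq_seriesFun, mul_pow, Real.sq_sqrt (neg_nonneg.2 hlam), besselSol₁]
  ring_nf

theorem besselY0_sqrt_mul {lam u : ℝ} (hlam : 0 < lam) (hu : 0 < u) :
    besselY0 (Real.sqrt lam * u) = 2 / Real.pi * (besselSol₂ lam u +
      (Real.log (Real.sqrt lam / 2) + Real.eulerMascheroniConstant) * besselSol₁ lam u) := by
  rw [besselY0_eq_seriesFun, besselJ0_sqrt_mul hlam.le, log_mul_div_two (Real.sqrt_pos.2 hlam) hu,
    mul_pow, Real.sq_sqrt hlam.le, besselSol₂, show -(lam * u ^ 2) / 4 = -lam / 4 * u ^ 2 by ring]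
  ring

theorem besselK0_sqrt_neg_mul {lam u : ℝ} (hlam : lam < 0) (hu : 0 < u) :
    besselK0 (Real.sqrt (-lam) * u) = -(besselSol₂ lam u +
      (Real.log (Real.sqrt (-lam) / 2) + Real.eulerMascheroniConstant) * besselSol₁ lam u) := by
  rw [besselK0_eq_seriesFun, besselI0_sqrt_neg_mul hlam.le,
    log_mul_div_two (Real.sqrt_pos.2 (neg_pos.2 hlam)) hu, mul_pow,
    Real.sq_sqrt (neg_nonneg.2 hlam.le), besselSol₂,
    show -lam * u ^ 2 / 4 = -lam / 4 * u ^ 2 by ring]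
  ring

namespace IsBesselSolution

variable {lam : ℝ} {f : ℝ → ℝ}

theorem exists_eq_besselJ0_besselY0 (hf : IsBesselSolution lam f) (hlam : 0 < lam) :
    ∃ c₁ c₂ : ℝ, ∀ u > 0,
      f u = c₁ * besselJ0 (Real.sqrt lam * u) + c₂ * besselY0 (Real.sqrt lam * u) := by
  obtain ⟨c₁, c₂, hc⟩ := hf.exists_eq_besselSol
  set L := Real.log (Real.sqrt lam / 2) + Real.eulerMascheroniConstant
  refine ⟨c₁ - c₂ * L, Real.pi / 2 * c₂, fun u hu => ?_⟩
  rw [hc u hu, besselJ0_sqrt_mul hlam.le, besselY0_sqrt_mul hlam hu]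
  field_simp
  ring

theorem exists_eq_besselI0_besselK0 (hf : IsBesselSolution lam f) (hlam : lam < 0) :
    ∃ c₁ c₂ : ℝ, ∀ u > 0,
      f u = c₁ * besselI0 (Real.sqrt (-lam) * u) + c₂ * besselK0 (Real.sqrt (-lam) * u) := by
  obtain ⟨c₁, c₂, hc⟩ := hf.exists_eq_besselSol
  set L := Real.log (Real.sqrt (-lam) / 2) + Real.eulerMascheroniConstant
  refine ⟨c₁ - c₂ * L, -c₂, fun u hu => ?_⟩
  rw [hc u hu, besselI0_sqrt_neg_mul hlam.le, besselK0_sqrt_neg_mul hlam hu]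
  ring

end IsBesselSolution

/-! ### The semi-isotropic Laplacian -/

theorem lapI_eq (ψ : ℝ → ℝ → ℝ) {u : ℝ} (hu : 0 < u) (v : ℝ) :
    lapI ψ u v = -deriv (fun t => t * deriv (fun s => ψ s v) t) u / u +
      deriv (fun w => deriv (fun s => ψ u s) w) v / u ^ 2 := by
  have hW : ∀ t > 0, Real.sqrt |(-1 : ℝ) * t ^ 2 - 0 ^ 2| = t := fun t ht => by
    rw [show (-1 : ℝ) * t ^ 2 - 0 ^ 2 = -t ^ 2 by ring, abs_neg, abs_of_nonneg (sq_nonneg t),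
      Real.sqrt_sq ht.le]
  have h₁ : (fun t => (t ^ 2 * deriv (fun s => ψ s v) t - 0 * deriv (fun s => ψ t s) v) /
      Real.sqrt |(-1 : ℝ) * t ^ 2 - 0 ^ 2|) =ᶠ[𝓝 u] fun t => t * deriv (fun s => ψ s v) t :=
    eventually_of_mem (Ioi_mem_nhds hu) fun t (ht : 0 < t) => by
      dsimp only
      rw [hW t ht, zero_mul, sub_zero]
      field_simp
  have h₂ : (fun w => (0 * deriv (fun s => ψ s w) u - (-1 : ℝ) * deriv (fun s => ψ u s) w) /
      Real.sqrt |(-1 : ℝ) * u ^ 2 - 0 ^ 2|) = fun w => deriv (fun s => ψ u s) w / u := by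
    ext w
    rw [hW u hu]
    ring
  rw [lapI, h₁.deriv_eq, h₂, deriv_div_const, hW u hu]
  field_simp
  ring

theorem lapI_mul_left (h : ℝ → ℝ) {u : ℝ} (hu : 0 < u) (v : ℝ) :
    lapI (fun u v => u * h v) u v = (deriv (deriv h) v - h v) / u := by
  rw [lapI_eq _ hu]
  simp only [deriv_mul_const_field', deriv_id'', one_mul, deriv_const_mul_field']
  field_simp
  ring

theorem lapI_comp_fst (f : ℝ → ℝ) {u : ℝ} (hu : 0 < u) (hf : DifferentiableAt ℝ (deriv f) u)
    (v : ℝ) : lapI (fun u _ => f u) u v = -(deriv (deriv f) u + deriv f u / u) := by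
  have h : HasDerivAt (fun t => t * deriv f t) _ u := (hasDerivAt_id u).mul hf.hasDerivAt
  rw [lapI_eq _ hu, h.deriv]
  simp only [deriv_const', id]
  field_simp
  ring

end

/-- Let `f` be twice differentiable on `(0,∞)` with `u ↦ f''(u) + f'(u)/u` not identically
zero (the surface of revolution `r(u,v) = (u sinh v, u cosh v, f(u))` is not
semi-isotropic minimal). If `Δrᵢ = λᵢ rᵢ` for `i = 1,2,3` at all points with `u > 0`,
then `λ₁ = λ₂ = 0`, `λ₃ ≠ 0`, `f'' + f'/u + λ₃ f = 0` on `(0,∞)`, and `f` is a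
combination of `J₀, Y₀` (if `λ₃ > 0`) resp. `I₀, K₀` (if `λ₃ < 0`). -/
theorem surface_of_revolution_finite_type
    (f : ℝ → ℝ)
    (hf : ∀ u ∈ Set.Ioi (0 : ℝ), DifferentiableAt ℝ f u)
    (hf' : ∀ u ∈ Set.Ioi (0 : ℝ), DifferentiableAt ℝ (deriv f) u)
    (hmin : ∃ u ∈ Set.Ioi (0 : ℝ), deriv (deriv f) u + deriv f u / u ≠ 0)
    (lam₁ lam₂ lam₃ : ℝ)
    (h1 : ∀ u ∈ Set.Ioi (0 : ℝ), ∀ v : ℝ,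
      lapI (fun u v => u * Real.sinh v) u v = lam₁ * (u * Real.sinh v))
    (h2 : ∀ u ∈ Set.Ioi (0 : ℝ), ∀ v : ℝ,
      lapI (fun u v => u * Real.cosh v) u v = lam₂ * (u * Real.cosh v))
    (h3 : ∀ u ∈ Set.Ioi (0 : ℝ), ∀ v : ℝ,
      lapI (fun u _ => f u) u v = lam₃ * f u) :
    lam₁ = 0 ∧ lam₂ = 0 ∧ lam₃ ≠ 0 ∧
    (∀ u ∈ Set.Ioi (0 : ℝ), deriv (deriv f) u + deriv f u / u + lam₃ * f u = 0) ∧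
    (0 < lam₃ → ∃ c₁ c₂ : ℝ, ∀ u ∈ Set.Ioi (0 : ℝ),
      f u = c₁ * besselJ0 (Real.sqrt lam₃ * u) + c₂ * besselY0 (Real.sqrt lam₃ * u)) ∧
    (lam₃ < 0 → ∃ c₁ c₂ : ℝ, ∀ u ∈ Set.Ioi (0 : ℝ),
      f u = c₁ * besselI0 (Real.sqrt (-lam₃) * u) + c₂ * besselK0 (Real.sqrt (-lam₃) * u)) := by
  have hlam₁ : lam₁ = 0 := by
    have h := h1 1 (Set.mem_Ioi.2 one_pos) 1
    rw [lapI_mul_left _ one_pos, Real.deriv_sinh, Real.deriv_cosh, sub_self, zero_div,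
      one_mul] at h
    exact (mul_eq_zero.1 h.symm).resolve_right (Real.sinh_pos_iff.2 one_pos).ne'
  have hlam₂ : lam₂ = 0 := by
    have h := h2 1 (Set.mem_Ioi.2 one_pos) 0
    rw [lapI_mul_left _ one_pos, Real.deriv_cosh, Real.deriv_sinh, sub_self, zero_div,
      one_mul, Real.cosh_zero, mul_one] at h
    exact h.symm
  have hode : ∀ u ∈ Set.Ioi (0 : ℝ), deriv (deriv f) u + deriv f u / u + lam₃ * f u = 0 :=
    fun u hu => by linarith [lapI_comp_fst f hu (hf' u hu) 0 ▸ h3 u hu 0]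
  have hsol : IsBesselSolution lam₃ f := fun u hu => ⟨hf u hu, hf' u hu, hode u hu⟩
  refine ⟨hlam₁, hlam₂, ?_, hode, hsol.exists_eq_besselJ0_besselY0,
    hsol.exists_eq_besselI0_besselK0⟩
  rintro rfl
  obtain ⟨u, hu, hne⟩ := hmin
  exact hne (by simpa using hode u hu)
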